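/- arXiv:0905.3682 — 2 statements merged into one kernel-verified Lean document; each statement's English description precedes it below -/
import Mathlib

section
/- For any positive integer k, the expected number of fixed points of π^k, where π is a uniformly random permutation of an n-element set, tends to τ(k) as n → ∞, where τ(k) is the number of positive divisors of k. Moreover, for n ≥ k this expectation is exactly τ(k). -/
open Filter

/-! A point is fixed by `π ^ k` iff the length of its cycle divides `k`, and for each `1 ≤ d ≤ n`
exactly `(n - 1)!` permutations of an `n`-set put a given point on a cycle of length `d`. Summing
over the `n` points and the divisors `d ≤ n` of `k`, the expectation is the number of divisors of
`k` that are at most `n`.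

The count `(n - 1)!` comes from the bijection `Perm (Fin (n + 1)) ≃ Fin (n + 1) × Perm (Fin n)`,
`(p, σ) ↦ swap 0 p * σ`: when `p = y.succ`, the point `0` is inserted into the cycle of `σ`
through `y`, so its cycle length is one more than that of `y`. -/

section

open Finset Function
open scoped Nat

namespace Equiv.Perm

variable {α : Type*}

lemma minimalPeriod_pos [Finite α] (π : Perm α) (x : α) : 0 < minimalPeriod π x :=
  minimalPeriod_pos_of_mem_periodicPts (π.injective.mem_periodicPts x)

lemma pow_apply_eq_self_iff_minimalPeriod_dvd (π : Perm α) (x : α) (k : ℕ) :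
    (π ^ k) x = x ↔ minimalPeriod π x ∣ k := by
  rw [← isPeriodicPt_iff_minimalPeriod_dvd, IsPeriodicPt, IsFixedPt, iterate_eq_pow]

lemma minimalPeriod_conj_apply (c π : Perm α) (x : α) :
    minimalPeriod (c * π * c⁻¹) (c x) = minimalPeriod π x := by
  rw [minimalPeriod_eq_minimalPeriod_iff]
  intro m
  rw [IsPeriodicPt, IsFixedPt, IsPeriodicPt, IsFixedPt, iterate_eq_pow, iterate_eq_pow, conj_pow]
  simp

lemma card_minimalPeriod_eq_congr [Fintype α] [DecidableEq α] (x y : α) (d : ℕ) :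
    #{π : Perm α | minimalPeriod π x = d} = #{π : Perm α | minimalPeriod π y = d} := by
  obtain ⟨c, rfl⟩ : ∃ c : Perm α, c x = y := ⟨swap x y, swap_apply_left x y⟩
  refine card_equiv (MulAut.conj c).toEquiv fun π => ?_
  simp only [mem_filter, mem_univ, true_and, MulEquiv.toEquiv_eq_coe, MulEquiv.coe_toEquiv,
    MulAut.conj_apply, minimalPeriod_conj_apply]

lemma minimalPeriod_decomposeFin_symm_zero {n : ℕ} (σ : Perm (Fin n)) :
    minimalPeriod (decomposeFin.symm (0, σ)) 0 = 1 := by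
  rw [minimalPeriod_eq_one_iff_isFixedPt, IsFixedPt, decomposeFin_symm_apply_zero]

lemma minimalPeriod_decomposeFin_symm_succ {n : ℕ} (y : Fin n) (σ : Perm (Fin n)) :
    minimalPeriod (decomposeFin.symm (y.succ, σ)) 0 = minimalPeriod σ y + 1 := by
  obtain ⟨m, hm⟩ : ∃ m, minimalPeriod σ y = m + 1 :=
    Nat.exists_eq_add_one.mpr (minimalPeriod_pos σ y)
  rw [hm]
  set π := decomposeFin.symm (y.succ, σ)
  have orbit : ∀ j ≤ m, π^[j + 1] 0 = (σ^[j] y).succ := by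
    intro j
    induction j with
    | zero => exact fun _ => decomposeFin_symm_apply_zero _ _
    | succ j ih =>
      intro hj
      have hne : σ^[j + 1] y ≠ y :=
        not_isPeriodicPt_of_pos_of_lt_minimalPeriod j.succ_ne_zero (by omega)
      rw [iterate_succ_apply', ih (by omega), decomposeFin_symm_apply_succ,
        ← iterate_succ_apply' σ, swap_apply_of_ne_of_ne (Fin.succ_ne_zero _)
          (fun h => hne (Fin.succ_injective _ h))]
  have hcycle : σ (σ^[m] y) = y := by
    have := iterate_minimalPeriod (f := σ) (x := y)
    rwa [hm, iterate_succ_apply'] at this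
  have hper : IsPeriodicPt π (m + 1 + 1) 0 := by
    rw [IsPeriodicPt, IsFixedPt, iterate_succ_apply', orbit m le_rfl, decomposeFin_symm_apply_succ,
      hcycle, swap_apply_right]
  refine le_antisymm (hper.minimalPeriod_le (by omega)) (not_lt.mp fun hlt => ?_)
  -- a shorter return to `0` would have to pass through some `(σ^[j] y).succ ≠ 0`
  obtain ⟨j, hj⟩ : ∃ j, minimalPeriod π 0 = j + 1 :=
    Nat.exists_eq_add_one.mpr (hper.minimalPeriod_pos (by omega))
  have h0 : π^[j + 1] 0 = 0 := hj ▸ iterate_minimalPeriod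
  exact Fin.succ_ne_zero _ ((orbit j (by omega)).symm.trans h0)

lemma card_minimalPeriod_eq (n : ℕ) (x : Fin n) {d : ℕ} (hd : 0 < d) (hdn : d ≤ n) :
    #{π : Perm (Fin n) | minimalPeriod π x = d} = (n - 1)! := by
  induction n generalizing d with
  | zero => exact x.elim0
  | succ n ih =>
    rw [card_minimalPeriod_eq_congr x 0]
    calc #{π : Perm (Fin (n + 1)) | minimalPeriod π 0 = d}
        = #{p : Fin (n + 1) × Perm (Fin n) | minimalPeriod (decomposeFin.symm p) 0 = d} :=
          card_equiv decomposeFin (by simp)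
      _ = #{σ : Perm (Fin n) | 1 = d} +
            ∑ y : Fin n, #{σ : Perm (Fin n) | minimalPeriod σ y + 1 = d} := by
          simp only [card_filter, Fintype.sum_prod_type, Fin.sum_univ_succ,
            minimalPeriod_decomposeFin_symm_zero, minimalPeriod_decomposeFin_symm_succ]
      _ = n ! := by
          obtain _ | _ | e := d
          · omega
          · simp [(minimalPeriod_pos _ _).ne', Fintype.card_perm]
          · simp only [Nat.add_right_cancel_iff, ih _ (Nat.succ_pos e) (by omega)]
            simp [Nat.mul_factorial_pred (show n ≠ 0 by omega)]

theorem sum_ncard_fixedPoints_pow {k n : ℕ} (hk : k ≠ 0) (hn : n ≠ 0) :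
    ∑ π : Perm (Fin n), {x : Fin n | (π ^ k) x = x}.ncard = n ! * #{d ∈ k.divisors | d ≤ n} := by
  have per_point (x : Fin n) :
      #{π : Perm (Fin n) | minimalPeriod π x ∣ k} = #{d ∈ k.divisors | d ≤ n} * (n - 1)! := by
    rw [card_eq_sum_card_fiberwise (f := fun π : Perm (Fin n) => minimalPeriod π x)
        (t := {d ∈ k.divisors | d ≤ n}) fun π hπ => mem_filter.mpr
          ⟨Nat.mem_divisors.mpr ⟨(mem_filter.mp hπ).2, hk⟩,
            minimalPeriod_le_card.trans_eq (Fintype.card_fin n)⟩,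
      ← smul_eq_mul, ← sum_const]
    refine sum_congr rfl fun d hd => ?_
    simp only [mem_filter, Nat.mem_divisors] at hd
    rw [← card_minimalPeriod_eq n x (Nat.pos_of_dvd_of_pos hd.1.1 (Nat.pos_of_ne_zero hk)) hd.2]
    congr 1
    ext π
    simp only [mem_filter, mem_univ, true_and, and_iff_right_iff_imp]
    exact fun h => h ▸ hd.1.1
  calc ∑ π : Perm (Fin n), {x : Fin n | (π ^ k) x = x}.ncard
      = ∑ π : Perm (Fin n), #{x | minimalPeriod π x ∣ k} := by
        simp [Set.ncard_eq_toFinset_card', pow_apply_eq_self_iff_minimalPeriod_dvd]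
    _ = ∑ x : Fin n, #{π : Perm (Fin n) | minimalPeriod π x ∣ k} := by
        simp only [card_filter]
        exact sum_comm
    _ = n ! * #{d ∈ k.divisors | d ≤ n} := by
        simp only [per_point, sum_const, card_univ, Fintype.card_fin, smul_eq_mul]
        rw [mul_left_comm, Nat.mul_factorial_pred hn, mul_comm]

end Equiv.Perm

end

/-- For a positive integer `k`, the expected number of fixed points of `π ^ k`, for `π`
uniformly random in `S_n`, tends to `τ(k)` (the number of positive divisors of `k`) as
`n → ∞`; moreover for every `n ≥ k` the expectation is exactly `τ(k)`. -/
theorem expected_fixed_points_pow (k : ℕ) (hk : 0 < k) :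
    Tendsto
      (fun n : ℕ =>
        (∑ π : Equiv.Perm (Fin n), ({x : Fin n | (π ^ k) x = x}.ncard : ℝ)) / n.factorial)
      atTop (nhds (Nat.divisors k).card) ∧
    ∀ n : ℕ, k ≤ n →
      (∑ π : Equiv.Perm (Fin n), ({x : Fin n | (π ^ k) x = x}.ncard : ℝ)) / n.factorial
        = (Nat.divisors k).card := by
  have exact_value (n : ℕ) (hn : k ≤ n) :
      (∑ π : Equiv.Perm (Fin n), ({x : Fin n | (π ^ k) x = x}.ncard : ℝ)) / n.factorial
        = (Nat.divisors k).card := by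
    have all_small : {d ∈ k.divisors | d ≤ n} = k.divisors :=
      Finset.filter_true_of_mem fun d hd => (Nat.divisor_le hd).trans hn
    rw [← Nat.cast_sum, Equiv.Perm.sum_ncard_fixedPoints_pow hk.ne' (by omega), all_small,
      Nat.cast_mul, mul_div_cancel_left₀ _ (by positivity)]
  refine ⟨tendsto_const_nhds.congr' ?_, exact_value⟩
  filter_upwards [eventually_ge_atTop k] with n hn using (exact_value n hn).symm
end

section
/- The probability that a uniformly random permutation of n elements has no cycle of length k tends to e^{-1/k} as n → ∞. -/
/-!
Fix a point `a` of an `n`-element set and sort the permutations by the cycle through `a`. A cycle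
of length `ℓ` through `a` can be chosen in `(n - 1)! / (n - ℓ)!` ways and the rest of the
permutation is an arbitrary permutation of the remaining `n - ℓ` points, so the proportions
`p n` of permutations without a `k`-cycle satisfy `n * p n = ∑_{ℓ ≤ n, ℓ ≠ k} p (n - ℓ)`
with `p 0 = 1`. The partial sums of the power series of `exp (-X ^ k / k)`, evaluated at `1`,
satisfy the same recurrence, hence equal `p n`, and they converge to `exp (-1 / k)`.
-/

open Filter Function Finset

theorem Function.Semiconj.minimalPeriod_eq {α β : Type*} {fa : α → α} {fb : β → β}
    {g : α → β} (h : Semiconj g fa fb) (hg : Injective g) (x : α) :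
    minimalPeriod fb (g x) = minimalPeriod fa x :=
  minimalPeriod_eq_minimalPeriod_iff.mpr fun n => by
    simp only [IsPeriodicPt, IsFixedPt, ← (h.iterate_right n).eq, hg.eq_iff]

namespace Equiv.Perm

variable {α β : Type*}

theorem ncard_orbit_zpowers [Finite α] (σ : Perm α) (x : α) :
    (MulAction.orbit (Subgroup.zpowers σ) x).ncard = minimalPeriod σ x := by
  classical
  have := Fintype.ofFinite α
  rw [← Nat.card_coe_set_eq, Nat.card_eq_fintype_card, ← MulAction.minimalPeriod_eq_card]
  rfl

theorem minimalPeriod_permCongr (e : α ≃ β) (σ : Perm α) (x : α) :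
    minimalPeriod (e.permCongr σ) (e x) = minimalPeriod σ x :=
  Semiconj.minimalPeriod_eq (fun y => by simp [Equiv.permCongr_apply]) e.injective x

theorem minimalPeriod_subtypePerm {p : α → Prop} (σ : Perm α) (h : ∀ x, p (σ x) ↔ p x)
    (x : Subtype p) : minimalPeriod (σ.subtypePerm h) x = minimalPeriod σ x :=
  (Semiconj.minimalPeriod_eq (g := Subtype.val) (fun _ => rfl) Subtype.val_injective x).symm

def NoCycleOfLength (k : ℕ) (σ : Perm α) : Prop :=
  ∀ x, minimalPeriod σ x ≠ k

theorem noCycleOfLength_permCongr_iff {k : ℕ} (e : α ≃ β) (σ : Perm α) :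
    (e.permCongr σ).NoCycleOfLength k ↔ σ.NoCycleOfLength k := by
  simp only [NoCycleOfLength, e.symm.forall_congr_left, symm_symm, minimalPeriod_permCongr]

theorem noCycleOfLength_iff_subtypePerm {k : ℕ} {p : α → Prop} (σ : Perm α)
    (h : ∀ x, p (σ x) ↔ p x) :
    σ.NoCycleOfLength k ↔ (∀ x, p x → minimalPeriod σ x ≠ k) ∧
      (σ.subtypePerm (p := (¬p ·)) fun x => (h x).not).NoCycleOfLength k := by
  simp only [NoCycleOfLength, minimalPeriod_subtypePerm, Subtype.forall]
  exact ⟨fun hσ => ⟨fun x _ => hσ x, fun x _ => hσ x⟩,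
    fun ⟨hp, hnp⟩ x => (em (p x)).elim (hp x) (hnp x)⟩

theorem apply_iff_of_eqOn {p : α → Prop} {c σ : Perm α} (hc : ∀ x, p (c x) ↔ p x)
    (h : ∀ x, p x → σ x = c x) (x : α) : p (σ x) ↔ p x := by
  refine ⟨fun hσx => ?_, fun hx => h x hx ▸ (hc x).mpr hx⟩
  have hy : p (c.symm (σ x)) := (hc _).mp (by simpa using hσx)
  have : c.symm (σ x) = x := σ.injective (by rw [h _ hy, apply_symm_apply])
  exact this ▸ hy

def eqOnEquivPermCompl (c : Perm α) {p : α → Prop} [DecidablePred p]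
    (hc : ∀ x, p (c x) ↔ p x) :
    {σ : Perm α // ∀ x, p x → σ x = c x} ≃ Perm {x // ¬p x} where
  toFun σ := σ.1.subtypePerm fun x => (apply_iff_of_eqOn hc σ.2 x).not
  invFun τ := ⟨(c.subtypePerm hc).subtypeCongr τ, fun _ hx => subtypeCongr.left_apply _ _ hx⟩
  left_inv σ := Subtype.ext <| ext fun x => by
    by_cases hx : p x
    · simp [subtypeCongr.left_apply _ _ hx, σ.2 x hx]
    · simp [subtypeCongr.right_apply _ _ hx]
  right_inv τ := ext fun x => by simp [subtypeCongr.right_apply_subtype]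

noncomputable def orbitList (σ : Perm α) (a : α) : List α :=
  List.ofFn fun i : Fin (minimalPeriod σ a) => σ^[i] a

@[simp]
theorem length_orbitList (σ : Perm α) (a : α) : (σ.orbitList a).length = minimalPeriod σ a :=
  List.length_ofFn

@[simp]
theorem getElem_orbitList (σ : Perm α) (a : α) {i : ℕ} (hi : i < (σ.orbitList a).length) :
    (σ.orbitList a)[i] = σ^[i] a :=
  List.getElem_ofFn ..

theorem nodup_orbitList (σ : Perm α) (a : α) : (σ.orbitList a).Nodup :=
  List.nodup_ofFn.mpr fun i j hij =>
    Fin.ext ((iterate_eq_iterate_iff_of_lt_minimalPeriod i.2 j.2).mp hij)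

theorem minimalPeriod_of_mem_orbitList [Finite α] {σ : Perm α} {a x : α}
    (hx : x ∈ σ.orbitList a) : minimalPeriod σ x = minimalPeriod σ a := by
  obtain ⟨i, rfl⟩ := List.mem_ofFn.mp hx
  exact minimalPeriod_apply_iterate (σ.injective.mem_periodicPts a) i

variable [DecidableEq α]

theorem apply_eq_formPerm_of_mem_orbitList {σ : Perm α} {a x : α} (hx : x ∈ σ.orbitList a) :
    σ x = (σ.orbitList a).formPerm x := by
  obtain ⟨i, hi, rfl⟩ := List.getElem_of_mem hx
  rw [List.formPerm_apply_getElem _ (nodup_orbitList σ a), getElem_orbitList, getElem_orbitList,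
    length_orbitList, iterate_mod_minimalPeriod_eq, iterate_succ_apply']

theorem orbitList_eq_cons_iff {σ : Perm α} {a : α} {t : List α} (ht : (a :: t).Nodup) :
    σ.orbitList a = a :: t ↔ ∀ x ∈ a :: t, σ x = (a :: t).formPerm x := by
  refine ⟨fun h x hx => h ▸ apply_eq_formPerm_of_mem_orbitList (h ▸ hx), fun h => ?_⟩
  set l := a :: t
  have hL : 0 < l.length := List.length_pos_of_ne_nil (List.cons_ne_nil a t)
  have hiter : ∀ n, σ^[n] a = l[n % l.length]'(Nat.mod_lt n hL) := by
    intro n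
    induction n with
    | zero => simp [l]
    | succ n ih =>
      rw [iterate_succ_apply', ih, h _ (List.getElem_mem _), List.formPerm_apply_getElem _ ht]
      simp only [Nat.mod_add_mod]
  have hper : minimalPeriod σ a = l.length := by
    refine Nat.dvd_antisymm ?_ ?_
    · refine IsPeriodicPt.minimalPeriod_dvd ?_
      simp [IsPeriodicPt, IsFixedPt, hiter, l]
    · refine Nat.dvd_of_mod_eq_zero ?_
      have := (isPeriodicPt_minimalPeriod σ a).eq
      rw [hiter] at this
      exact (ht.getElem_inj_iff (j := 0) (hj := hL)).mp this
  refine List.ext_getElem (by simp [hper]) fun i hi hi' => ?_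
  rw [getElem_orbitList, hiter]
  simp only [Nat.mod_eq_of_lt hi']

def orbitListEquiv {a : α} {t : List α} (ht : (a :: t).Nodup) :
    {σ : Perm α // σ.orbitList a = a :: t} ≃ Perm {x // x ∉ a :: t} :=
  (Equiv.subtypeEquivRight fun _ => orbitList_eq_cons_iff ht).trans
    (eqOnEquivPermCompl _ fun _ => List.formPerm_mem_iff_mem)

theorem card_noCycleOfLength_orbitList_eq [Finite α] (k : ℕ) {a : α} {t : List α}
    (ht : (a :: t).Nodup) :
    Nat.card {σ : Perm α // σ.NoCycleOfLength k ∧ σ.orbitList a = a :: t} =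
      if t.length + 1 = k then 0
      else Nat.card {τ : Perm {x // x ∉ a :: t} // τ.NoCycleOfLength k} := by
  split_ifs with hk
  · refine Nat.card_eq_zero.mpr (Or.inl ⟨fun σ => σ.2.1 a ?_⟩)
    rw [← length_orbitList, σ.2.2, List.length_cons, hk]
  · refine Nat.card_congr <| (Equiv.subtypeEquivRight fun _ => and_comm).trans <|
      (Equiv.subtypeSubtypeEquivSubtypeInter _ _).symm.trans <|
      (orbitListEquiv ht).subtypeEquiv fun σ => ?_
    have hcyc : ∀ x ∈ a :: t, minimalPeriod σ.1 x ≠ k := fun x hx => by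
      rw [← σ.2] at hx
      rwa [minimalPeriod_of_mem_orbitList hx, ← length_orbitList, σ.2]
    have hinv := apply_iff_of_eqOn (fun _ => List.formPerm_mem_iff_mem)
      ((orbitList_eq_cons_iff ht).mp σ.2)
    exact (noCycleOfLength_iff_subtypePerm σ.1 hinv).trans (and_iff_right hcyc)

variable [Fintype α]

noncomputable def nodupConsLists (a : α) (m : ℕ) : Finset (List α) :=
  univ.image fun f : Fin m ↪ {x // x ≠ a} => a :: List.ofFn fun i => (f i : α)

theorem card_nodupConsLists (a : α) (m : ℕ) :
    #(nodupConsLists a m) = (Fintype.card α - 1).descFactorial m := by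
  rw [nodupConsLists, card_image_of_injective, card_univ, Fintype.card_embedding_eq,
    Fintype.card_fin, Fintype.card_subtype_compl, Fintype.card_subtype_eq]
  intro f g hfg
  ext i
  exact congrFun (List.ofFn_injective (List.cons_injective hfg)) i

theorem exists_eq_cons_of_mem_nodupConsLists {a : α} {m : ℕ} {l : List α}
    (hl : l ∈ nodupConsLists a m) :
    ∃ t, l = a :: t ∧ (a :: t).Nodup ∧ t.length = m := by
  obtain ⟨f, -, rfl⟩ := mem_image.mp hl
  refine ⟨_, rfl, List.nodup_cons.mpr ⟨fun h => ?_, ?_⟩, List.length_ofFn⟩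
  · obtain ⟨i, hi⟩ := List.mem_ofFn.mp h
    exact (f i).2 hi
  · exact List.nodup_ofFn.mpr (Subtype.val_injective.comp f.injective)

theorem cons_mem_nodupConsLists {a : α} {t : List α} (ht : (a :: t).Nodup) :
    a :: t ∈ nodupConsLists a t.length := by
  obtain ⟨hat, htn⟩ := List.nodup_cons.mp ht
  let f : Fin t.length ↪ {x // x ≠ a} :=
    ⟨fun i => ⟨t[i], fun h => hat (h ▸ List.getElem_mem _)⟩,
      fun i j hij => Fin.ext (htn.getElem_inj_iff.mp (congrArg Subtype.val hij))⟩
  exact mem_image.mpr ⟨f, mem_univ _, by simp [f, List.ofFn_getElem]⟩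

theorem orbitList_mem_nodupConsLists (σ : Perm α) (a : α) :
    σ.orbitList a ∈ nodupConsLists a (minimalPeriod σ a - 1) := by
  obtain ⟨q, hq⟩ := Nat.exists_eq_add_of_lt (minimalPeriod_pos_of_mem_periodicPts
    (σ.injective.mem_periodicPts a))
  have hcons : σ.orbitList a = a :: List.ofFn fun i : Fin q => σ^[i + 1] a := by
    rw [orbitList, List.ofFn_congr (by omega : minimalPeriod σ a = q + 1), List.ofFn_succ]
    simp
  have hnodup := nodup_orbitList σ a
  rw [hcons] at hnodup ⊢
  simpa [hq] using cons_mem_nodupConsLists hnodup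

end Equiv.Perm

open Equiv Equiv.Perm

noncomputable def numNoCycleOfLength (k : ℕ) (α : Type*) : ℕ :=
  Nat.card {σ : Perm α // σ.NoCycleOfLength k}

theorem numNoCycleOfLength_congr {α β : Type*} (k : ℕ) (e : α ≃ β) :
    numNoCycleOfLength k α = numNoCycleOfLength k β :=
  Nat.card_congr (e.permCongr.subtypeEquiv fun σ => (noCycleOfLength_permCongr_iff e σ).symm)

theorem numNoCycleOfLength_eq_sum {α : Type*} [Fintype α] [DecidableEq α] (k : ℕ) (a : α) :
    numNoCycleOfLength k α = ∑ m ∈ range (Fintype.card α),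
      if m + 1 = k then 0
      else (Fintype.card α - 1).descFactorial m *
        numNoCycleOfLength k (Fin (Fintype.card α - (m + 1))) := by
  classical
  set n := Fintype.card α
  have hfiber : ∀ m, ∀ l ∈ nodupConsLists a m,
      #{σ ∈ univ.filter (NoCycleOfLength k) | σ.orbitList a = l} =
        if m + 1 = k then 0 else numNoCycleOfLength k (Fin (n - (m + 1))) := by
    intro m l hl
    obtain ⟨t, rfl, ht, rfl⟩ := exists_eq_cons_of_mem_nodupConsLists hl
    rw [filter_filter, ← Fintype.card_subtype, ← Nat.card_eq_fintype_card,
      card_noCycleOfLength_orbitList_eq k ht]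
    refine if_congr Iff.rfl rfl (numNoCycleOfLength_congr k (Fintype.equivFinOfCardEq ?_))
    rw [Fintype.card_subtype_compl, Fintype.card_of_subtype (a :: t).toFinset (by simp),
      List.toFinset_card_of_nodup ht, List.length_cons]
  rw [numNoCycleOfLength, Nat.card_eq_fintype_card, Fintype.card_subtype,
    card_eq_sum_card_fiberwise (f := (orbitList · a)) (t := (range n).biUnion (nodupConsLists a))
      ?maps, sum_biUnion ?disj]
  · refine sum_congr rfl fun m _ => ?_
    rw [sum_congr rfl (hfiber m), sum_const, card_nodupConsLists, smul_eq_mul, mul_ite, mul_zero]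
  case maps =>
    intro σ _
    have hpos := minimalPeriod_pos_of_mem_periodicPts (σ.injective.mem_periodicPts a)
    have hle : minimalPeriod σ a ≤ n := minimalPeriod_le_card
    exact mem_biUnion.mpr ⟨_, mem_range.mpr (by omega), orbitList_mem_nodupConsLists σ a⟩
  case disj =>
    intro m _ m' _ hne
    refine disjoint_left.mpr fun l hl hl' => hne ?_
    obtain ⟨t, rfl, -, rfl⟩ := exists_eq_cons_of_mem_nodupConsLists hl
    obtain ⟨t', ht', -, rfl⟩ := exists_eq_cons_of_mem_nodupConsLists hl'
    exact congrArg List.length (List.cons_injective ht')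

-- the coefficient of `X ^ m` in `exp (-X ^ k / k)`
noncomputable def expCoeff (k m : ℕ) : ℝ :=
  if k ∣ m then (-(1 / k : ℝ)) ^ (m / k) / (m / k).factorial else 0

noncomputable def expPartialSum (k n : ℕ) : ℝ :=
  ∑ m ∈ range (n + 1), expCoeff k m

variable {k : ℕ}

-- `f' = -X ^ (k - 1) * f` for `f = exp (-X ^ k / k)`, coefficientwise
theorem mul_expCoeff (hk : 0 < k) (m : ℕ) :
    m * expCoeff k m = -(if k ≤ m then expCoeff k (m - k) else 0) := by
  rcases lt_or_ge m k with hmk | hkm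
  · rw [if_neg hmk.not_ge, neg_zero]
    rcases Nat.eq_zero_or_pos m with rfl | hm
    · simp
    · simp [expCoeff, Nat.not_dvd_of_pos_of_lt hm hmk]
  obtain ⟨i, rfl⟩ := Nat.exists_eq_add_of_le hkm
  rw [if_pos hkm, Nat.add_sub_cancel_left]
  simp only [expCoeff, Nat.dvd_add_self_left]
  split_ifs with hi
  · obtain ⟨j, rfl⟩ := hi
    rw [← mul_one_add, Nat.mul_div_cancel_left _ hk, Nat.mul_div_cancel_left _ hk, add_comm 1,
      Nat.factorial_succ]
    have hk' : (k : ℝ) ≠ 0 := by exact_mod_cast hk.ne'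
    push_cast
    rw [pow_succ]
    field_simp
  · simp

theorem expPartialSum_succ (n : ℕ) :
    expPartialSum k (n + 1) = expPartialSum k n + expCoeff k (n + 1) :=
  sum_range_succ _ _

theorem expPartialSum_shift (n : ℕ) :
    (if k ≤ n + 1 then expPartialSum k (n + 1 - k) else 0) =
      (if k ≤ n then expPartialSum k (n - k) else 0) +
        if k ≤ n + 1 then expCoeff k (n + 1 - k) else 0 := by
  rcases lt_trichotomy k (n + 1) with h | rfl | h
  · rw [if_pos h.le, if_pos (by omega), if_pos h.le, Nat.sub_add_comm (by omega),
      expPartialSum_succ]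
  · simp [expPartialSum]
  · rw [if_neg (by omega), if_neg (by omega), if_neg (by omega), add_zero]

theorem mul_expPartialSum_eq_sub (hk : 0 < k) : ∀ n : ℕ,
    n * expPartialSum k n = ∑ j ∈ range n, expPartialSum k j -
      if k ≤ n then expPartialSum k (n - k) else 0
  | 0 => by simp [hk.ne']
  | n + 1 => by
    have hcoeff := mul_expCoeff hk (n + 1)
    rw [sum_range_succ, expPartialSum_shift, expPartialSum_succ]
    push_cast at hcoeff ⊢
    linear_combination mul_expPartialSum_eq_sub hk n + hcoeff

theorem mul_expPartialSum (hk : 0 < k) (n : ℕ) :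
    n * expPartialSum k n =
      ∑ m ∈ range n, if m + 1 = k then 0 else expPartialSum k (n - (m + 1)) := by
  have hterm : ∀ m, (if m + 1 = k then 0 else expPartialSum k (n - (m + 1))) =
      expPartialSum k (n - 1 - m) - if m = k - 1 then expPartialSum k (n - 1 - m) else 0 := by
    intro m
    rw [Nat.sub_sub, add_comm 1 m]
    split_ifs <;> first | omega | ring
  rw [sum_congr rfl fun m _ => hterm m, sum_sub_distrib, sum_range_reflect, sum_ite_eq',
    mul_expPartialSum_eq_sub hk]
  simp only [mem_range]
  congr 2
  · exact propext (by omega)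
  · congr 1; omega

theorem tendsto_expPartialSum (hk : 0 < k) :
    Tendsto (expPartialSum k) atTop (nhds (Real.exp (-(1 / k)))) := by
  have hexp : HasSum (expCoeff k ∘ (k * ·)) (Real.exp (-(1 / k))) := by
    have hcoeff : expCoeff k ∘ (k * ·) = fun j => (-(1 / k : ℝ)) ^ j / j.factorial := by
      funext j
      simp [expCoeff, Nat.mul_div_cancel_left _ hk]
    rw [hcoeff, Real.exp_eq_exp_ℝ]
    exact NormedSpace.expSeries_div_hasSum_exp _
  rw [(mul_right_injective₀ hk.ne').hasSum_iff] at hexp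
  · exact hexp.tendsto_sum_nat.comp (tendsto_add_atTop_nat 1)
  · intro m hm
    simp only [expCoeff, ite_eq_right_iff]
    rintro ⟨j, rfl⟩
    exact absurd ⟨j, rfl⟩ hm

theorem eq_of_mul_eq_sum {x y : ℕ → ℝ} (h0 : x 0 = y 0)
    (hx : ∀ n : ℕ, n * x n = ∑ m ∈ range n, if m + 1 = k then 0 else x (n - (m + 1)))
    (hy : ∀ n : ℕ, n * y n = ∑ m ∈ range n, if m + 1 = k then 0 else y (n - (m + 1))) :
    x = y := by
  funext n
  induction n using Nat.strong_induction_on with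
  | _ n ih =>
    rcases n with _ | n
    · exact h0
    have hsum : (∑ m ∈ range (n + 1), if m + 1 = k then 0 else x (n + 1 - (m + 1))) =
        ∑ m ∈ range (n + 1), if m + 1 = k then 0 else y (n + 1 - (m + 1)) :=
      sum_congr rfl fun m _ => by rw [ih _ (by omega)]
    exact mul_left_cancel₀ (Nat.cast_ne_zero.mpr n.succ_ne_zero)
      ((hx _).trans (hsum.trans (hy _).symm))

theorem mul_numNoCycleOfLength_div_factorial (k n : ℕ) :
    n * (numNoCycleOfLength k (Fin n) / n.factorial : ℝ) =
      ∑ m ∈ range n, if m + 1 = k then 0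
        else (numNoCycleOfLength k (Fin (n - (m + 1))) / (n - (m + 1)).factorial : ℝ) := by
  rcases n with _ | n
  · simp
  rw [numNoCycleOfLength_eq_sum k (0 : Fin (n + 1))]
  simp only [Fintype.card_fin, add_tsub_cancel_right, Nat.add_sub_add_right]
  rw [Nat.factorial_succ, Nat.cast_mul, mul_div_assoc',
    mul_div_mul_left _ _ (Nat.cast_ne_zero.mpr n.succ_ne_zero), Nat.cast_sum, sum_div]
  refine sum_congr rfl fun m hm => ?_
  split_ifs
  · simp
  have hmn : m ≤ n := Nat.lt_succ_iff.mp (mem_range.mp hm)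
  have hdesc : (n.descFactorial m : ℝ) ≠ 0 :=
    Nat.cast_ne_zero.mpr (Nat.descFactorial_eq_zero_iff_lt.not.mpr hmn.not_gt)
  rw [← Nat.factorial_mul_descFactorial hmn]
  push_cast
  field_simp

theorem numNoCycleOfLength_fin_div_factorial (hk : 0 < k) (n : ℕ) :
    (numNoCycleOfLength k (Fin n) / n.factorial : ℝ) = expPartialSum k n := by
  refine congrFun (eq_of_mul_eq_sum ?_ (mul_numNoCycleOfLength_div_factorial k)
    (mul_expPartialSum hk)) n
  simp [numNoCycleOfLength, NoCycleOfLength, expPartialSum, expCoeff]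

/-- The probability that a uniformly random permutation of `n` elements has no cycle of
length `k` tends to `e^{-1/k}` as `n → ∞`. -/
theorem prob_no_k_cycle (k : ℕ) (hk : 0 < k) :
    Tendsto
      (fun n : ℕ =>
        ({π : Equiv.Perm (Fin n) |
            ∀ x : Fin n, (MulAction.orbit (Subgroup.zpowers π) x).ncard ≠ k}.ncard : ℝ)
          / n.factorial)
      atTop (nhds (Real.exp (-(1 / k)))) := by
  have hcount : ∀ n, {π : Perm (Fin n) |
      ∀ x : Fin n, (MulAction.orbit (Subgroup.zpowers π) x).ncard ≠ k}.ncard =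
        numNoCycleOfLength k (Fin n) := fun n => by
    simp only [ncard_orbit_zpowers]
    exact (Nat.card_coe_set_eq _).symm
  simp only [hcount, numNoCycleOfLength_fin_div_factorial hk]
  exact tendsto_expPartialSum hk
end
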